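/- arXiv:1411.2890 — 4 statements merged into one kernel-verified Lean document; each statement's English description precedes it below -/
import Mathlib

section
/- If E₀, E₁ are i.i.d. exponentially distributed random variables with mean Ē > 0 and Γ > 0, then E[max(1/2 - E₀/(2Γ), 1 - (E₀+E₁)/(2Γ), 0)] = (1 - Ē/Γ) + (Ē/(2Γ))e^{-Γ/Ē} + (1/2 + Ē/(2Γ))e^{-2Γ/Ē}. -/
/-!
Write `r = 1/Ē` for the rate and `x⁺ = max x 0`. Since
`max (Γ - x) (2Γ - x - y) = Γ + (Γ - y)⁺ - x`, the integrand equals `(c(E₁) - E₀)⁺ / (2Γ)` with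
`c(y) = Γ + (Γ - y)⁺ ≥ 0`. Integrating out `E₀` first with `E[(c - X)⁺] = c - (1 - e^{-rc})/r`
leaves an affine combination of `(Γ - E₁)⁺` and `e^{-r(Γ - E₁)⁺}`, whose expectations are
`Γ - (1 - e^{-rΓ})/r` and `(1 + rΓ) e^{-rΓ}`.
-/

open MeasureTheory ProbabilityTheory Real Filter Set

lemma exponentialPDFReal_of_nonneg {r x : ℝ} (hx : 0 ≤ x) :
    exponentialPDFReal r x = r * exp (-(r * x)) := by
  simp [exponentialPDFReal, gammaPDFReal, hx]

lemma exponentialPDFReal_of_neg {r x : ℝ} (hx : x < 0) : exponentialPDFReal r x = 0 := by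
  simp [exponentialPDFReal, gammaPDFReal, hx]

lemma ae_nonneg_expMeasure (r : ℝ) : ∀ᵐ x ∂expMeasure r, 0 ≤ x := by
  rw [ae_iff]
  simp only [not_le]
  change (volume.withDensity (exponentialPDF r)) (Iio 0) = 0
  rw [withDensity_apply _ measurableSet_Iio]
  exact lintegral_exponentialPDF_of_nonpos le_rfl

lemma integrable_expMeasure_of_abs_le {r C : ℝ} (hr : 0 < r) {g : ℝ → ℝ} (hg : Continuous g)
    (hgC : ∀ x, 0 ≤ x → |g x| ≤ C) : Integrable g (expMeasure r) :=
  haveI := isProbabilityMeasure_expMeasure hr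
  Integrable.of_bound hg.aestronglyMeasurable C <|
    (ae_nonneg_expMeasure r).mono hgC

lemma integrable_expMeasure_prod_of_abs_le {r C : ℝ} (hr : 0 < r) {g : ℝ × ℝ → ℝ}
    (hg : Continuous g) (hgC : ∀ x y, 0 ≤ x → 0 ≤ y → |g (x, y)| ≤ C) :
    Integrable g ((expMeasure r).prod (expMeasure r)) :=
  haveI := isProbabilityMeasure_expMeasure hr
  Integrable.of_bound hg.aestronglyMeasurable C <| by
    filter_upwards [Measure.quasiMeasurePreserving_fst.ae (ae_nonneg_expMeasure r),
      Measure.quasiMeasurePreserving_snd.ae (ae_nonneg_expMeasure r)] with p hx hy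
    exact hgC p.1 p.2 hx hy

lemma integral_expMeasure_eq_setIntegral {r : ℝ} (hr : 0 < r) (g : ℝ → ℝ) :
    ∫ x, g x ∂expMeasure r = ∫ x in Ioi 0, r * exp (-(r * x)) * g x := by
  change ∫ x, g x ∂volume.withDensity (exponentialPDF r) = _
  rw [integral_withDensity_eq_integral_toReal_smul (f := exponentialPDF r)
      (measurable_exponentialPDFReal r).ennreal_ofReal
      (ae_of_all _ fun _ => ENNReal.ofReal_lt_top), ← integral_Ici_eq_integral_Ioi,
    ← setIntegral_eq_integral_of_forall_compl_eq_zero (s := Ici 0) fun x hx => ?_]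
  · refine setIntegral_congr_fun measurableSet_Ici fun x hx => ?_
    rw [exponentialPDF, ENNReal.toReal_ofReal (exponentialPDFReal_nonneg hr x),
      exponentialPDFReal_of_nonneg hx, smul_eq_mul]
  · rw [exponentialPDF, exponentialPDFReal_of_neg (not_le.mp hx), ENNReal.ofReal_zero,
      ENNReal.toReal_zero, zero_smul]

lemma integral_expMeasure_of_eqOn_Ioi {r c k : ℝ} (hr : 0 < r) (hc : 0 ≤ c) {g : ℝ → ℝ}
    (hg : Continuous g) (hgk : EqOn g (fun _ => k) (Ioi c)) :
    ∫ x, g x ∂expMeasure r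
      = (∫ x in 0..c, r * exp (-(r * x)) * g x) + k * exp (-(r * c)) := by
  have htail : EqOn (fun x => r * exp (-(r * x)) * g x) (fun x => r * exp (-r * x) * k) (Ioi c) :=
    fun x hx => by simp only [hgk hx, neg_mul]
  have hint : IntegrableOn (fun x => r * exp (-(r * x)) * g x) (Ioi c) :=
    IntegrableOn.congr_fun
      (((integrableOn_exp_mul_Ioi (neg_lt_zero.2 hr) c).const_mul r).mul_const k)
      htail.symm measurableSet_Ioi
  rw [integral_expMeasure_eq_setIntegral hr, ← Ioc_union_Ioi_eq_Ioi hc,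
    setIntegral_union (Ioc_disjoint_Ioi le_rfl) measurableSet_Ioi
      (Continuous.integrableOn_Ioc (by fun_prop)) hint,
    intervalIntegral.integral_of_le hc, setIntegral_congr_fun measurableSet_Ioi htail,
    integral_mul_const, integral_const_mul, integral_exp_mul_Ioi (neg_lt_zero.2 hr)]
  field_simp

lemma integral_expMeasure_posPart_sub {r c : ℝ} (hr : 0 < r) (hc : 0 ≤ c) :
    ∫ x, max (c - x) 0 ∂expMeasure r = c - (1 - exp (-(r * c))) / r := by
  have hF : ∀ x, HasDerivAt (fun x => exp (-(r * x)) * (x - c + 1 / r))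
      (r * exp (-(r * x)) * (c - x)) x := fun x => by
    have he : HasDerivAt (fun x => exp (-(r * x))) (exp (-(r * x)) * -r) x := by
      simpa using ((hasDerivAt_id x).const_mul r).neg.exp
    have hl : HasDerivAt (fun x => x - c + 1 / r) 1 x := ((hasDerivAt_id x).sub_const c).add_const _
    exact (he.mul hl).congr_deriv (by field_simp; ring)
  rw [integral_expMeasure_of_eqOn_Ioi hr hc (k := 0) (by fun_prop)
      fun x hx => max_eq_right (by linarith [mem_Ioi.1 hx]),
    intervalIntegral.integral_congr (g := fun x => r * exp (-(r * x)) * (c - x)) fun x hx => by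
      rw [uIcc_of_le hc] at hx
      simp only [max_eq_left (sub_nonneg.2 hx.2)],
    intervalIntegral.integral_eq_sub_of_hasDerivAt (fun x _ => hF x)
      ((Continuous.intervalIntegrable (by fun_prop) _ _)), mul_zero, neg_zero, exp_zero]
  field_simp
  ring

lemma integral_expMeasure_exp_neg_posPart_sub {r c : ℝ} (hr : 0 < r) (hc : 0 ≤ c) :
    ∫ x, exp (-(r * max (c - x) 0)) ∂expMeasure r = (1 + r * c) * exp (-(r * c)) := by
  rw [integral_expMeasure_of_eqOn_Ioi hr hc (k := 1) (by fun_prop)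
      fun x hx => by simp [max_eq_right (by linarith [mem_Ioi.1 hx] : c - x ≤ 0)],
    intervalIntegral.integral_congr (g := fun _ => r * exp (-(r * c))) fun x hx => by
      rw [uIcc_of_le hc] at hx
      simp only [max_eq_left (sub_nonneg.2 hx.2), mul_assoc, ← exp_add]
      ring_nf,
    intervalIntegral.integral_const, smul_eq_mul]
  ring

lemma integral_expMeasure_affine_posPart_sub {r c : ℝ} (hr : 0 < r) (hc : 0 ≤ c) (a b d : ℝ) :
    ∫ x, a + b * max (c - x) 0 + d * exp (-(r * max (c - x) 0)) ∂expMeasure r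
      = a + b * (c - (1 - exp (-(r * c))) / r) + d * ((1 + r * c) * exp (-(r * c))) := by
  have := isProbabilityMeasure_expMeasure hr
  have hpos : Integrable (fun x => max (c - x) 0) (expMeasure r) :=
    integrable_expMeasure_of_abs_le (C := c) hr (by fun_prop) fun x hx => by
      rw [abs_of_nonneg (le_max_right _ _)]
      exact max_le (by linarith) hc
  have hexp : Integrable (fun x => exp (-(r * max (c - x) 0))) (expMeasure r) :=
    integrable_expMeasure_of_abs_le (C := 1) hr (by fun_prop) fun x _ => by
      rw [abs_of_pos (exp_pos _), exp_le_one_iff, neg_nonpos]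
      positivity
  rw [integral_add ((integrable_const _).fun_add (hpos.const_mul _)) (hexp.const_mul _),
    integral_add (integrable_const _) (hpos.const_mul _), integral_const, integral_const_mul,
    integral_const_mul, integral_expMeasure_posPart_sub hr hc,
    integral_expMeasure_exp_neg_posPart_sub hr hc, probReal_univ, one_smul]

lemma max_energy_shortage_eq {Γ : ℝ} (hΓ : 0 < Γ) (x y : ℝ) :
    max (max (1 / 2 - x / (2 * Γ)) (1 - (x + y) / (2 * Γ))) 0
      = max (Γ + max (Γ - y) 0 - x) 0 / (2 * Γ) := by
  have h2Γ : 0 < 2 * Γ := by positivity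
  have h1 : 1 / 2 - x / (2 * Γ) = (Γ - x) / (2 * Γ) := by field_simp
  have h2 : 1 - (x + y) / (2 * Γ) = (Γ - x + (Γ - y)) / (2 * Γ) := by field_simp; ring
  rw [h1, h2, max_div_div_right h2Γ.le, ← zero_div (2 * Γ), max_div_div_right h2Γ.le, zero_div]
  congr 2
  rcases le_total y Γ with h | h
  · rw [max_eq_right (by linarith), max_eq_left (by linarith)]; ring
  · rw [max_eq_left (by linarith), max_eq_right (by linarith)]; ring

/-- For i.i.d. exponential `E₀, E₁` with mean `Ē > 0` and `Γ > 0`,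
`E[max(1/2 - E₀/(2Γ), 1 - (E₀+E₁)/(2Γ), 0)]
  = (1 - Ē/Γ) + (Ē/(2Γ))e^{-Γ/Ē} + (1/2 + Ē/(2Γ))e^{-2Γ/Ē}`. -/
theorem stmt1 (Ebar Γ : ℝ) (hE : 0 < Ebar) (hΓ : 0 < Γ) :
    ∫ p : ℝ × ℝ,
        max (max (1 / 2 - p.1 / (2 * Γ)) (1 - (p.1 + p.2) / (2 * Γ))) 0
        ∂((expMeasure (1 / Ebar)).prod (expMeasure (1 / Ebar))) =
      (1 - Ebar / Γ) + (Ebar / (2 * Γ)) * Real.exp (-(Γ / Ebar))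
        + (1 / 2 + Ebar / (2 * Γ)) * Real.exp (-(2 * Γ / Ebar)) := by
  set r := 1 / Ebar with hr_def
  have hr : 0 < r := by positivity
  have := isProbabilityMeasure_expMeasure hr
  have hinner : ∀ y, ∫ x, max (Γ + max (Γ - y) 0 - x) 0 / (2 * Γ) ∂expMeasure r
      = (Γ - 1 / r) / (2 * Γ) + (1 / (2 * Γ)) * max (Γ - y) 0
        + (exp (-(r * Γ)) / (2 * Γ * r)) * exp (-(r * max (Γ - y) 0)) := fun y => by
    rw [integral_div, integral_expMeasure_posPart_sub hr (by positivity), mul_add, neg_add,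
      exp_add]
    field_simp
    ring
  have hint : Integrable (fun p : ℝ × ℝ => max (Γ + max (Γ - p.2) 0 - p.1) 0 / (2 * Γ))
      ((expMeasure r).prod (expMeasure r)) :=
    integrable_expMeasure_prod_of_abs_le (C := 1) hr (by fun_prop) fun x y hx hy => by
      rw [abs_of_nonneg (by positivity), div_le_one (by positivity)]
      exact max_le (by linarith [max_le (by linarith : Γ - y ≤ Γ) hΓ.le]) (by positivity)
  simp_rw [max_energy_shortage_eq hΓ]
  rw [integral_prod_symm _ hint]
  simp_rw [hinner]
  rw [integral_expMeasure_affine_posPart_sub hr hΓ.le]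
  have hexpΓ : exp (-(Γ / Ebar)) = exp (-(r * Γ)) := by rw [hr_def]; ring_nf
  have hexp2Γ : exp (-(2 * Γ / Ebar)) = exp (-(r * Γ)) ^ 2 := by rw [← exp_nat_mul, hr_def]; ring_nf
  rw [hexpΓ, hexp2Γ, hr_def]
  field_simp
  ring
end

section
/- Let E₁,…,E_M be i.i.d. nonnegative integrable random variables with mean Ē, finite variance σ², and Γ > 0. Define f_n(M) = (n/M)(1 - (∑_{i=1}^n E_i)/(nΓ)) and P_es(M) = E[max(0, max_{1≤n≤M} f_n(M))]. Then P_es(M) → max(0, 1 - Ē/Γ) as M → ∞. -/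
/-!
Write `S_n = E_1 + ⋯ + E_n`. Then `f_n(M) = (n - S_n / Γ) / M`, so the shortage variable is
`max(0, max_{n ≤ M} a_n) / M` with `a_n = n - S_n / Γ`. By the strong law of large numbers
`a_n / n → 1 - Ē / Γ` almost surely, and for any real sequence with `a_n / n → c` the normalised
running maximum `max(0, max_{n ≤ M} a_n) / M` tends to `max 0 c`: the last term `a_M / M` forces
it up to `c`, while every earlier term is at most `b' M` plus a constant once `a_n < b' n` for
large `n`. Since `E_i ≥ 0`, the shortage variable lies in `[0, 1]`, and dominated convergence
passes the almost sure limit through the expectation.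
-/

open MeasureTheory ProbabilityTheory Real Filter Set Topology

lemma Finset.fold_max_Icc_le_add_mul {a : ℕ → ℝ} {b : ℝ} {N : ℕ} (hb : 0 ≤ b)
    (ha : ∀ n, N < n → a n ≤ b * n) (M : ℕ) :
    (Finset.Icc 1 M).fold max 0 a ≤ (Finset.Icc 1 N).fold max 0 a + b * M := by
  have hB : 0 ≤ (Finset.Icc 1 N).fold max 0 a := Finset.le_fold_max _ |>.2 (Or.inl le_rfl)
  have hbM : 0 ≤ b * M := by positivity
  refine Finset.fold_max_le _ |>.2 ⟨by linarith, fun n hn => ?_⟩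
  obtain ⟨hn1, hnM⟩ := Finset.mem_Icc.1 hn
  rcases le_or_gt n N with hnN | hNn
  · have : a n ≤ (Finset.Icc 1 N).fold max 0 a :=
      Finset.le_fold_max _ |>.2 (Or.inr ⟨n, Finset.mem_Icc.2 ⟨hn1, hnN⟩, le_rfl⟩)
    linarith
  · calc a n ≤ b * n := ha n hNn
      _ ≤ b * M := by gcongr
      _ ≤ _ := le_add_of_nonneg_left hB

theorem tendsto_fold_max_Icc_div {a : ℕ → ℝ} {c : ℝ}
    (h : Tendsto (fun n : ℕ => a n / n) atTop (𝓝 c)) :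
    Tendsto (fun M : ℕ => (Finset.Icc 1 M).fold max 0 a / M) atTop (𝓝 (max 0 c)) := by
  refine tendsto_order.2 ⟨fun b hb => ?_, fun b hb => ?_⟩
  · filter_upwards [(tendsto_const_nhds.max h).eventually (lt_mem_nhds hb),
      eventually_ge_atTop 1] with M hM hM1
    refine hM.trans_le (max_le ?_ ?_)
    · exact div_nonneg (Finset.le_fold_max _ |>.2 (Or.inl le_rfl)) M.cast_nonneg
    · gcongr
      exact Finset.le_fold_max _ |>.2 (Or.inr ⟨M, Finset.mem_Icc.2 ⟨hM1, le_rfl⟩, le_rfl⟩)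
  · obtain ⟨b', hcb', hb'b⟩ := exists_between hb
    obtain ⟨N, hN⟩ := eventually_atTop.1 <|
      (h.eventually (gt_mem_nhds ((le_max_right 0 c).trans_lt hcb'))).and (eventually_gt_atTop 0)
    set B := (Finset.Icc 1 N).fold max 0 a
    have hbound := Finset.fold_max_Icc_le_add_mul ((le_max_left 0 c).trans hcb'.le)
      (N := N) fun n hn => by
        obtain ⟨han, hn0⟩ := hN n hn.le
        exact ((div_lt_iff₀ (Nat.cast_pos.2 hn0)).1 han).le
    have hlim : Tendsto (fun M : ℕ => B / M + b') atTop (𝓝 b') := by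
      simpa using (tendsto_const_div_atTop_nhds_zero_nat B).add_const b'
    filter_upwards [hlim.eventually (gt_mem_nhds hb'b), eventually_gt_atTop 0] with M hM hM0
    have hM0' : (0 : ℝ) < M := Nat.cast_pos.2 hM0
    calc (Finset.Icc 1 M).fold max 0 a / M ≤ (B + b' * M) / M := by gcongr; exact hbound M
      _ = B / M + b' := by field_simp
      _ < b := hM

lemma Finset.fold_max_zero_div {ι : Type*} (s : Finset ι) (f : ι → ℝ) {c : ℝ} (hc : 0 ≤ c) :
    s.fold max 0 f / c = s.fold max 0 fun i => f i / c := by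
  rw [← Finset.fold_hom (m := (· / c)) fun x y => (max_div_div_right hc x y).symm, zero_div]

lemma Finset.aemeasurable_fold_max {ι Ω δ : Type*} [MeasurableSpace Ω] {μ : Measure Ω}
    [LinearOrder δ] [MeasurableSpace δ] [MeasurableSup₂ δ] (s : Finset ι) (b : δ)
    {F : ι → Ω → δ} (hF : ∀ i, AEMeasurable (F i) μ) :
    AEMeasurable (fun ω => s.fold max b fun i => F i ω) μ := by
  classical
  induction s using Finset.induction with
  | empty => exact aemeasurable_const
  | insert i s hi ih =>
    simp only [Finset.fold_insert hi]
    exact (hF i).sup ih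

/-- `energyShortage x Γ M` is the paper's `max(0, max_{1 ≤ n ≤ M} f_n(M))` for the harvested
energies `x`, so that `P_es(M)` is its expectation. -/
noncomputable def energyShortage (x : ℕ → ℝ) (Γ : ℝ) (M : ℕ) : ℝ :=
  (Finset.Icc 1 M).fold max 0 fun n : ℕ =>
    ((n : ℝ) / (M : ℝ)) * (1 - (∑ i ∈ Finset.Icc 1 n, x i) / ((n : ℝ) * Γ))

lemma energyShortage_eq_fold_max_div (x : ℕ → ℝ) {Γ : ℝ} (hΓ : Γ ≠ 0) (M : ℕ) :
    energyShortage x Γ M =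
      (Finset.Icc 1 M).fold max 0 (fun n : ℕ => n - (∑ i ∈ Finset.Icc 1 n, x i) / Γ) / M := by
  rw [Finset.fold_max_zero_div _ _ M.cast_nonneg, energyShortage]
  refine Finset.fold_congr fun n hn => ?_
  have hn0 : (n : ℝ) ≠ 0 := Nat.cast_ne_zero.2 (Nat.pos_iff_ne_zero.1 (Finset.mem_Icc.1 hn).1)
  field_simp

theorem tendsto_energyShortage {x : ℕ → ℝ} {e Γ : ℝ} (hΓ : Γ ≠ 0)
    (h : Tendsto (fun n : ℕ => (∑ i ∈ Finset.Icc 1 n, x i) / n) atTop (𝓝 e)) :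
    Tendsto (energyShortage x Γ) atTop (𝓝 (max 0 (1 - e / Γ))) := by
  refine (tendsto_fold_max_Icc_div ?_).congr fun M => (energyShortage_eq_fold_max_div x hΓ M).symm
  refine (tendsto_const_nhds.sub (h.div_const Γ)).congr' ?_
  filter_upwards [eventually_gt_atTop 0] with n hn
  have hn0 : (n : ℝ) ≠ 0 := Nat.cast_ne_zero.2 hn.ne'
  field_simp

lemma energyShortage_nonneg (x : ℕ → ℝ) (Γ : ℝ) (M : ℕ) : 0 ≤ energyShortage x Γ M :=
  Finset.le_fold_max _ |>.2 (Or.inl le_rfl)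

lemma energyShortage_le_one {x : ℕ → ℝ} (hx : ∀ i, 0 ≤ x i) {Γ : ℝ} (hΓ : 0 ≤ Γ) (M : ℕ) :
    energyShortage x Γ M ≤ 1 := by
  refine Finset.fold_max_le _ |>.2 ⟨zero_le_one, fun n hn => ?_⟩
  have hnM : (n : ℝ) ≤ M := Nat.cast_le.2 (Finset.mem_Icc.1 hn).2
  have hS : 0 ≤ (∑ i ∈ Finset.Icc 1 n, x i) / ((n : ℝ) * Γ) :=
    div_nonneg (Finset.sum_nonneg fun i _ => hx i) (by positivity)
  calc ((n : ℝ) / M) * (1 - (∑ i ∈ Finset.Icc 1 n, x i) / ((n : ℝ) * Γ))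
      ≤ (n : ℝ) / M * 1 := by gcongr; linarith
    _ ≤ 1 := by rw [mul_one]; exact div_le_one_of_le₀ hnM M.cast_nonneg

lemma aemeasurable_energyShortage {Ω : Type*} [MeasurableSpace Ω] {μ : Measure Ω}
    {X : ℕ → Ω → ℝ} (hX : ∀ i, AEMeasurable (X i) μ) (Γ : ℝ) (M : ℕ) :
    AEMeasurable (fun ω => energyShortage (X · ω) Γ M) μ := by
  unfold energyShortage
  exact Finset.aemeasurable_fold_max _ _ fun n => aemeasurable_const.mul <|
    aemeasurable_const.sub ((Finset.aemeasurable_fun_sum _ fun i _ => hX i).div_const _)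

theorem strong_law_ae_real_Icc {Ω : Type*} [MeasurableSpace Ω] {μ : Measure Ω}
    (X : ℕ → Ω → ℝ) (hint : Integrable (X 1) μ) (hindep : Pairwise (Function.onFun (· ⟂ᵢ[μ] ·) X))
    (hident : ∀ i, IdentDistrib (X i) (X 1) μ μ) :
    ∀ᵐ ω ∂μ, Tendsto (fun n : ℕ => (∑ i ∈ Finset.Icc 1 n, X i ω) / n) atTop (𝓝 μ[X 1]) := by
  have hslln := strong_law_ae_real (fun i => X (i + 1)) hint
    (fun i j hij => hindep (by omega)) fun i => hident (i + 1)
  filter_upwards [hslln] with ω hω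
  simpa only [Finset.range_eq_Ico, Finset.sum_Ico_add' (X · ω) 0 _ 1, zero_add,
    Finset.Ico_add_one_right_eq_Icc] using hω

theorem stmt4_general {Ω : Type*} [MeasurableSpace Ω] (μ : Measure Ω) [IsProbabilityMeasure μ]
    (E : ℕ → Ω → ℝ)
    (hnonneg : ∀ i ω, 0 ≤ E i ω)
    (hL2 : ∀ i, MemLp (E i) 2 μ)
    (hindep : iIndepFun E μ)
    (hident : ∀ i, μ.map (E i) = μ.map (E 1))
    (Ebar Γ : ℝ) (hmean : (∫ ω, E 1 ω ∂μ) = Ebar)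
    (hΓ : 0 < Γ) :
    Tendsto (fun M : ℕ =>
        ∫ ω, (Finset.Icc 1 M).fold max 0
          (fun n : ℕ => ((n : ℝ) / (M : ℝ)) * (1 - (∑ i ∈ Finset.Icc 1 n, E i ω) / ((n : ℝ) * Γ))) ∂μ)
      atTop (nhds (max 0 (1 - Ebar / Γ))) := by
  have hE : ∀ i, AEMeasurable (E i) μ := fun i => (hL2 i).aemeasurable
  have hslln := strong_law_ae_real_Icc E ((hL2 1).integrable one_le_two)
    (fun _ _ hij => hindep.indepFun hij) fun i => ⟨hE i, hE 1, hident i⟩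
  rw [hmean] at hslln
  have hconv := tendsto_integral_of_dominated_convergence (fun _ => 1)
    (F := fun M ω => energyShortage (E · ω) Γ M)
    (fun M => (aemeasurable_energyShortage hE Γ M).aestronglyMeasurable)
    (integrable_const 1)
    (fun M => ae_of_all _ fun ω => by
      rw [Real.norm_of_nonneg (energyShortage_nonneg _ _ _)]
      exact energyShortage_le_one (hnonneg · ω) hΓ.le M)
    (hslln.mono fun ω hω => tendsto_energyShortage hΓ.ne' hω)
  simpa only [energyShortage, integral_const, probReal_univ, one_smul] using hconv

/-- Theorem 1 (asymptotic ESP): for i.i.d. nonnegative `E_i` with mean `Ē`, finite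
variance `σ²` and `Γ > 0`, the `M`-epoch energy shortage probability
`P_es(M) = E[max(0, max_{1≤n≤M} (n/M)(1 - ∑_{i=1}^n E_i/(nΓ)))]`
converges to `max(0, 1 - Ē/Γ)` as `M → ∞`. -/
theorem stmt4 {Ω : Type*} [MeasurableSpace Ω] (μ : Measure Ω) [IsProbabilityMeasure μ]
    (E : ℕ → Ω → ℝ) (hmeas : ∀ i, Measurable (E i))
    (hnonneg : ∀ i ω, 0 ≤ E i ω)
    (hL2 : ∀ i, MemLp (E i) 2 μ)
    (hindep : iIndepFun E μ)
    (hident : ∀ i, μ.map (E i) = μ.map (E 1))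
    (Ebar σ2 Γ : ℝ) (hmean : (∫ ω, E 1 ω ∂μ) = Ebar)
    (hvar : variance (E 1) μ = σ2) (hΓ : 0 < Γ) :
    Tendsto (fun M : ℕ =>
        ∫ ω, (Finset.Icc 1 M).fold max 0
          (fun n : ℕ => ((n : ℝ) / (M : ℝ)) * (1 - (∑ i ∈ Finset.Icc 1 n, E i ω) / ((n : ℝ) * Γ))) ∂μ)
      atTop (nhds (max 0 (1 - Ebar / Γ))) :=
  stmt4_general μ E hnonneg hL2 hindep hident Ebar Γ hmean hΓ
end

section
/- Let P(M) = E[max(0, max_{1≤n≤M} (n/M)(1 - ∑_{i=1}^n E_{i-1}/(nΓ)))] for i.i.d. nonnegative E_i with continuous distribution and mean Ē. Then for any positive integers M₁, M₂ with M = M₁ + M₂: P(M) ≤ (M₁/M)·P(M₁) + (M₂/M)·P(M₂). -/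
/-!
Write `S n = ∑_{i<n} (1 - E i / Γ)`, a random walk with i.i.d. increments, so that the `n`-th term
of `P M` is `S n / M` and `M * P M = 𝔼[max(0, max_{1≤n≤M} S n)]`. Pathwise, the running maximum
over `M₁ + M₂` steps is at most the running maximum over the first `M₁` steps plus that of the
walk restarted at time `M₁`; the restarted walk has the same law as the original one, so taking
expectations gives `M * P M ≤ M₁ * P M₁ + M₂ * P M₂`.
-/

open MeasureTheory ProbabilityTheory Real Filter Set

theorem Finset.fold_max_div_of_nonneg {ι : Type*} (s : Finset ι) (f : ι → ℝ) {c : ℝ}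
    (hc : 0 ≤ c) : s.fold max 0 (fun i => f i / c) = s.fold max 0 f / c := by
  simpa using Finset.fold_hom (s := s) (b := (0 : ℝ)) (f := f) (op := max) (op' := max)
    (m := fun x : ℝ => x / c) fun x y => (max_div_div_right hc x y).symm

section FoldMax

variable {α ι : Type*} [MeasurableSpace α] {s : Finset ι} {f : ι → α → ℝ}

theorem measurable_finset_fold_max (hf : ∀ i ∈ s, Measurable (f i)) :
    Measurable fun x => s.fold max 0 fun i => f i x := by
  induction s using Finset.cons_induction with
  | empty => exact measurable_const
  | cons a s ha ih =>
    simp only [Finset.fold_cons]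
    exact (hf a (s.mem_cons_self a)).max (ih fun i hi => hf i (Finset.mem_cons_of_mem hi))

theorem integrable_finset_fold_max {μ : Measure α}
    (hf : ∀ i ∈ s, Integrable (f i) μ) :
    Integrable (fun x => s.fold max 0 fun i => f i x) μ := by
  induction s using Finset.cons_induction with
  | empty => exact integrable_zero α ℝ μ
  | cons a s ha ih =>
    simp only [Finset.fold_cons]
    exact (hf a (s.mem_cons_self a)).sup (ih fun i hi => hf i (Finset.mem_cons_of_mem hi))

end FoldMax

noncomputable def maxPartialSum (y : ℕ → ℝ) (m : ℕ) : ℝ :=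
  (Finset.Icc 1 m).fold max 0 fun n => ∑ i ∈ Finset.range n, y i

theorem maxPartialSum_nonneg (y : ℕ → ℝ) (m : ℕ) : 0 ≤ maxPartialSum y m :=
  Finset.le_fold_max _ |>.mpr (Or.inl le_rfl)

theorem sum_range_le_maxPartialSum (y : ℕ → ℝ) {n m : ℕ} (h : n ≤ m) :
    ∑ i ∈ Finset.range n, y i ≤ maxPartialSum y m := by
  rcases Nat.eq_zero_or_pos n with rfl | hn
  · simpa using maxPartialSum_nonneg y m
  · exact Finset.le_fold_max _ |>.mpr (Or.inr ⟨n, Finset.mem_Icc.mpr ⟨hn, h⟩, le_rfl⟩)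

theorem maxPartialSum_add_le (y : ℕ → ℝ) (a b : ℕ) :
    maxPartialSum y (a + b) ≤ maxPartialSum y a + maxPartialSum (fun i => y (a + i)) b := by
  refine (Finset.fold_max_le _).mpr ⟨add_nonneg (maxPartialSum_nonneg _ _)
    (maxPartialSum_nonneg _ _), fun n hn => ?_⟩
  obtain ⟨-, hnab⟩ := Finset.mem_Icc.mp hn
  rcases le_or_gt n a with hna | han
  · linarith [sum_range_le_maxPartialSum y hna, maxPartialSum_nonneg (fun i => y (a + i)) b]
  · obtain ⟨k, rfl⟩ := Nat.exists_eq_add_of_le han.le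
    rw [Finset.sum_range_add]
    gcongr
    · exact sum_range_le_maxPartialSum y le_rfl
    · exact sum_range_le_maxPartialSum _ (by omega)

theorem measurable_maxPartialSum (m : ℕ) : Measurable fun y : ℕ → ℝ => maxPartialSum y m :=
  measurable_finset_fold_max fun _ _ => Finset.measurable_sum _ fun i _ => measurable_pi_apply i

section RandomWalk

variable {Ω : Type*} [MeasurableSpace Ω] {μ : Measure Ω}

theorem integrable_maxPartialSum {Y : ℕ → Ω → ℝ} (hY : ∀ i, Integrable (Y i) μ) (m : ℕ) :
    Integrable (fun ω => maxPartialSum (Y · ω) m) μ :=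
  integrable_finset_fold_max fun _ _ => integrable_finsetSum _ fun i _ => hY i

theorem ProbabilityTheory.iIndepFun.identDistrib_shift [IsProbabilityMeasure μ] {β : Type*}
    [MeasurableSpace β] {X : ℕ → Ω → β} (hmeas : ∀ i, Measurable (X i)) (hindep : iIndepFun X μ)
    (hident : ∀ i, μ.map (X i) = μ.map (X 0)) (c : ℕ) :
    IdentDistrib (fun ω i => X (c + i) ω) (fun ω i => X i ω) μ μ where
  aemeasurable_fst := (measurable_pi_lambda _ fun i => hmeas (c + i)).aemeasurable
  aemeasurable_snd := (measurable_pi_lambda _ hmeas).aemeasurable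
  map_eq := by
    rw [(hindep.precomp (add_right_injective c)).map_fun_eq_infinitePi_map fun i => hmeas _,
      hindep.map_fun_eq_infinitePi_map hmeas]
    simp only [hident]

theorem integral_maxPartialSum_add_le {Y : ℕ → Ω → ℝ} (hY : ∀ i, Integrable (Y i) μ) {a : ℕ}
    (hshift : IdentDistrib (fun ω i => Y (a + i) ω) (fun ω i => Y i ω) μ μ) (b : ℕ) :
    ∫ ω, maxPartialSum (Y · ω) (a + b) ∂μ
      ≤ ∫ ω, maxPartialSum (Y · ω) a ∂μ + ∫ ω, maxPartialSum (Y · ω) b ∂μ := by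
  have hrestart : ∫ ω, maxPartialSum (fun i => Y (a + i) ω) b ∂μ
      = ∫ ω, maxPartialSum (Y · ω) b ∂μ :=
    (hshift.comp (measurable_maxPartialSum b)).integral_eq
  rw [← hrestart, ← integral_add (integrable_maxPartialSum hY a)
    (integrable_maxPartialSum (fun i => hY (a + i)) b)]
  exact integral_mono (integrable_maxPartialSum hY _)
    ((integrable_maxPartialSum hY a).add (integrable_maxPartialSum (fun i => hY (a + i)) b))
    fun ω => maxPartialSum_add_le (Y · ω) a b

end RandomWalk

theorem fold_max_shortage_eq_maxPartialSum_div (e : ℕ → ℝ) (Γ : ℝ) (m : ℕ) :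
    (Finset.Icc 1 m).fold max 0
      (fun n : ℕ => ((n : ℝ) / (m : ℝ)) * (1 - (∑ i ∈ Finset.range n, e i) / ((n : ℝ) * Γ)))
      = maxPartialSum (fun i => 1 - e i / Γ) m / m := by
  rw [maxPartialSum, ← Finset.fold_max_div_of_nonneg _ _ m.cast_nonneg]
  refine Finset.fold_congr fun n hn => ?_
  have hn0 : (n : ℝ) ≠ 0 := by have := (Finset.mem_Icc.mp hn).1; positivity
  rw [Finset.sum_sub_distrib, ← Finset.sum_div]
  simp only [Finset.sum_const, Finset.card_range, nsmul_eq_mul, mul_one]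
  field_simp

theorem stmt10_general {Ω : Type*} [MeasurableSpace Ω] (μ : Measure Ω) [IsProbabilityMeasure μ]
    (E : ℕ → Ω → ℝ) (hmeas : ∀ i, Measurable (E i))
    (hint : ∀ i, Integrable (E i) μ)
    (hindep : iIndepFun E μ)
    (hident : ∀ i, μ.map (E i) = μ.map (E 0))
    (Γ : ℝ)
    (P : ℕ → ℝ)
    (hP : ∀ m : ℕ, P m = ∫ ω, (Finset.Icc 1 m).fold max 0
      (fun n : ℕ => ((n : ℝ) / (m : ℝ)) * (1 - (∑ i ∈ Finset.range n, E i ω) / ((n : ℝ) * Γ))) ∂μ)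
    (M₁ M₂ : ℕ) (h1 : 0 < M₁) (h2 : 0 < M₂) :
    P (M₁ + M₂) ≤ ((M₁ : ℝ) / (M₁ + M₂)) * P M₁ + ((M₂ : ℝ) / (M₁ + M₂)) * P M₂ := by
  set Y : ℕ → Ω → ℝ := fun i ω => 1 - E i ω / Γ
  set Q : ℕ → ℝ := fun m => ∫ ω, maxPartialSum (Y · ω) m ∂μ
  have hPQ (m : ℕ) : P m = Q m / m := by
    simp only [hP, Q, Y, fold_max_shortage_eq_maxPartialSum_div, integral_div]
  have hY : ∀ i, Integrable (Y i) μ := fun i => (integrable_const 1).sub ((hint i).div_const Γ)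
  have hshift : IdentDistrib (fun ω i => Y (M₁ + i) ω) (fun ω i => Y i ω) μ μ :=
    (hindep.identDistrib_shift hmeas hident M₁).comp (u := fun x i => 1 - x i / Γ) (by fun_prop)
  have hQ : Q (M₁ + M₂) ≤ Q M₁ + Q M₂ := integral_maxPartialSum_add_le hY hshift M₂
  have hM₁ : (0 : ℝ) < M₁ := Nat.cast_pos.mpr h1
  have hM₂ : (0 : ℝ) < M₂ := Nat.cast_pos.mpr h2
  rw [hPQ, hPQ, hPQ, Nat.cast_add]
  calc Q (M₁ + M₂) / (M₁ + M₂) ≤ (Q M₁ + Q M₂) / (M₁ + M₂) := by gcongr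
    _ = _ := by field_simp

/-- Weighted subadditivity of the energy shortage probability
`P(M) = E[max(0, max_{1≤n≤M} (n/M)(1 - ∑_{i=1}^n E_{i-1}/(nΓ)))]` for i.i.d.
nonnegative `E_i` with continuous distribution:
`P(M₁+M₂) ≤ (M₁/M)·P(M₁) + (M₂/M)·P(M₂)`. -/
theorem stmt10 {Ω : Type*} [MeasurableSpace Ω] (μ : Measure Ω) [IsProbabilityMeasure μ]
    (E : ℕ → Ω → ℝ) (hmeas : ∀ i, Measurable (E i))
    (hnonneg : ∀ i ω, 0 ≤ E i ω) (hint : ∀ i, Integrable (E i) μ)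
    (hindep : iIndepFun E μ)
    (hident : ∀ i, μ.map (E i) = μ.map (E 0))
    (hcont : ∀ x : ℝ, μ.map (E 0) {x} = 0)
    (Γ : ℝ) (hΓ : 0 < Γ)
    (P : ℕ → ℝ)
    (hP : ∀ m : ℕ, P m = ∫ ω, (Finset.Icc 1 m).fold max 0
      (fun n : ℕ => ((n : ℝ) / (m : ℝ)) * (1 - (∑ i ∈ Finset.range n, E i ω) / ((n : ℝ) * Γ))) ∂μ)
    (M₁ M₂ : ℕ) (h1 : 0 < M₁) (h2 : 0 < M₂) :
    P (M₁ + M₂) ≤ ((M₁ : ℝ) / (M₁ + M₂)) * P M₁ + ((M₂ : ℝ) / (M₁ + M₂)) * P M₂ :=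
  stmt10_general μ E hmeas hint hindep hident Γ P hP M₁ M₂ h1 h2
end

section
/- For the Shannon power-rate function g(R) = 2^{2R} - 1 and P̄ > 0, the function h(R) = R(2^{2R₀}-1)/(2^{2R}-1) with R₀ = (1/2)log₂(1+P̄) is strictly decreasing on (R₀, ∞), and h(R) < R₀ for all R > R₀. -/
/-!
Since `2 ^ (2 * R₀) - 1 = P̄`, we have `h R = P̄ · R / (4 ^ R - 1)`. By strict convexity of
`exp`, the secant slope `(4 ^ R - 1) / R` of `R ↦ 4 ^ R` through `0` is strictly increasing on
`(0, ∞)`, so `h` is strictly decreasing there, and `h R < h R₀ = R₀` for `R > R₀`.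
-/

open Real Set

theorem strictMonoOn_rpow_sub_one_div {b : ℝ} (hb : 1 < b) :
    StrictMonoOn (fun x : ℝ => (b ^ x - 1) / x) (Ioi 0) := by
  intro x (hx : 0 < x) y (hy : 0 < y) hxy
  have hc : 0 < log b := log_pos hb
  have hslope := strictConvexOn_exp.secant_strict_mono (a := 0) (mem_univ _) (mem_univ _)
    (mem_univ _) (mul_pos hc hx).ne' (mul_pos hc hy).ne' (mul_lt_mul_of_pos_left hxy hc)
  have hexp : ∀ z : ℝ, z ≠ 0 →
      (b ^ z - 1) / z = log b * ((exp (log b * z) - exp 0) / (log b * z - 0)) := fun z hz => by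
    rw [rpow_def_of_pos (zero_lt_one.trans hb), exp_zero, sub_zero]
    field_simp
  simp only [hexp x hx.ne', hexp y hy.ne']
  exact mul_lt_mul_of_pos_left hslope hc

theorem strictAntiOn_div_rpow_sub_one {b : ℝ} (hb : 1 < b) :
    StrictAntiOn (fun x : ℝ => x / (b ^ x - 1)) (Ioi 0) := by
  intro x (hx : 0 < x) y hy hxy
  have hpos : 0 < (b ^ x - 1) / x := div_pos (sub_pos.2 (one_lt_rpow hb hx)) hx
  have hslope : (b ^ x - 1) / x < (b ^ y - 1) / y := strictMonoOn_rpow_sub_one_div hb hx hy hxy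
  simp only [← inv_div (b ^ y - 1), ← inv_div (b ^ x - 1)]
  exact (inv_lt_inv₀ (hpos.trans hslope) hpos).2 hslope

/-- For the Shannon law and `P̄ > 0`, with `R₀ = (1/2)log₂(1+P̄)`, the asymptotic
effective rate `h(R) = R(2^{2R₀}-1)/(2^{2R}-1)` is strictly decreasing on `(R₀, ∞)`
and `h(R) < R₀` for all `R > R₀`. -/
theorem stmt18 (Pbar : ℝ) (hP : 0 < Pbar)
    (R₀ : ℝ) (hR₀ : R₀ = Real.logb 2 (1 + Pbar) / 2)
    (h : ℝ → ℝ)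
    (hh : ∀ R : ℝ, h R = R * ((2 : ℝ) ^ (2 * R₀) - 1) / ((2 : ℝ) ^ (2 * R) - 1)) :
    StrictAntiOn h (Set.Ioi R₀) ∧ ∀ R : ℝ, R₀ < R → h R < R₀ := by
  have hR₀_pos : 0 < R₀ := by
    rw [hR₀]
    exact half_pos (logb_pos one_lt_two (lt_add_of_pos_right 1 hP))
  have hPbar : (2 : ℝ) ^ (2 * R₀) - 1 = Pbar := by
    rw [hR₀, mul_div_cancel₀ _ two_ne_zero, rpow_logb two_pos (by norm_num) (by linarith)]
    ring
  have hh' : ∀ R, h R = Pbar * (R / ((4 : ℝ) ^ R - 1)) := fun R => by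
    rw [hh, hPbar, rpow_mul zero_le_two]
    norm_num
    ring
  have hanti : StrictAntiOn h (Ioi 0) := fun x hx y hy hxy => by
    simp only [hh']
    exact mul_lt_mul_of_pos_left (strictAntiOn_div_rpow_sub_one (by norm_num) hx hy hxy) hP
  have hh_R₀ : h R₀ = R₀ := by
    rw [hh, hPbar, mul_div_cancel_right₀ _ hP.ne']
  refine ⟨hanti.mono (Ioi_subset_Ioi hR₀_pos.le), fun R hR => ?_⟩
  rw [← hh_R₀]
  exact hanti hR₀_pos (hR₀_pos.trans hR) hR
end
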